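/- arXiv:2407.05429 — 6 statements merged into one kernel-verified Lean document; each statement's English description precedes it below -/
import Mathlib

section
/- Let A be a flexible algebra over a field of characteristic not 2, with x∘y = (1/2)(xy+yx). Then A satisfies the Jordan identity ((x·x)·y)·x = (x·x)·(y·x) for all x, y if and only if the commutative algebra (A, ∘) satisfies the Jordan identity ((x∘x)∘y)∘x = (x∘x)∘(y∘x) for all x, y. -/
/-- symmetrized product -/
def sym {k V : Type*} [Field k] [AddCommGroup V] [Module k V]
    (mul : V →ₗ[k] V →ₗ[k] V) (x y : V) : V :=
  (2 : k)⁻¹ • (mul x y + mul y x)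

private lemma csub2 {G : Type*} [AddCommGroup G] {x y a1 b1 a2 b2 : G}
    (h1 : a1 = b1) (h2 : a2 = b2)
    (key : x - y = (a1 - b1) + (a2 - b2)) : x = y := by
  have hz : (a1 - b1) + (a2 - b2) = 0 := by simp only [h1, h2]; abel
  exact sub_eq_zero.mp (key.trans hz)

private lemma csub3 {G : Type*} [AddCommGroup G] {x y a1 b1 a2 b2 a3 b3 : G}
    (h1 : a1 = b1) (h2 : a2 = b2) (h3 : a3 = b3)
    (key : x - y = (a1 - b1) + (a2 - b2) + (a3 - b3)) : x = y := by
  have hz : (a1 - b1) + (a2 - b2) + (a3 - b3) = 0 := by simp only [h1, h2, h3]; abel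
  exact sub_eq_zero.mp (key.trans hz)

private lemma csub4 {G : Type*} [AddCommGroup G] {x y a1 b1 a2 b2 a3 b3 a4 b4 : G}
    (h1 : a1 = b1) (h2 : a2 = b2) (h3 : a3 = b3) (h4 : a4 = b4)
    (key : x - y = (a1 - b1) + (a2 - b2) + (a3 - b3) + (a4 - b4)) : x = y := by
  have hz : (a1 - b1) + (a2 - b2) + (a3 - b3) + (a4 - b4) = 0 := by
    simp only [h1, h2, h3, h4]; abel
  exact sub_eq_zero.mp (key.trans hz)

private lemma csub5 {G : Type*} [AddCommGroup G] {x y a1 b1 a2 b2 a3 b3 a4 b4 a5 b5 : G}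
    (h1 : a1 = b1) (h2 : a2 = b2) (h3 : a3 = b3) (h4 : a4 = b4) (h5 : a5 = b5)
    (key : x - y = (a1 - b1) + (a2 - b2) + (a3 - b3) + (a4 - b4) + (a5 - b5)) : x = y := by
  have hz : (a1 - b1) + (a2 - b2) + (a3 - b3) + (a4 - b4) + (a5 - b5) = 0 := by
    simp only [h1, h2, h3, h4, h5]; abel
  exact sub_eq_zero.mp (key.trans hz)

theorem stmt_1 {k V : Type*} [Field k] [AddCommGroup V] [Module k V]
    (h2 : (2 : k) ≠ 0) (mul : V →ₗ[k] V →ₗ[k] V)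
    (hflex : ∀ x y : V, mul (mul x y) x = mul x (mul y x)) :
    (∀ x y : V, mul (mul (mul x x) y) x = mul (mul x x) (mul y x)) ↔
    (∀ x y : V, sym mul (sym mul (sym mul x x) y) x =
        sym mul (sym mul x x) (sym mul y x)) := by
  have cancel2 : ∀ w : V, (2:k) • w = 0 → w = 0 := by
    intro w hw
    have h := congrArg (fun z => (2:k)⁻¹ • z) hw
    simpa [smul_smul, inv_mul_cancel₀ h2] using h
  have cancel4 : ∀ P Q : V, ((2:k)⁻¹ * (2:k)⁻¹) • P = ((2:k)⁻¹ * (2:k)⁻¹) • Q → P = Q := by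
    intro P Q h
    have h' := congrArg (fun z => ((2:k) * (2:k)) • z) h
    simp only [smul_smul] at h'
    have hone : (2:k) * 2 * (2⁻¹ * 2⁻¹) = 1 := by field_simp
    rwa [hone, one_smul, one_smul] at h'
  -- linearized flexibility
  have anti : ∀ a b c : V, mul (mul a b) c + mul (mul c b) a
      = mul a (mul b c) + mul c (mul b a) := by
    intro a b c
    have h := hflex (a + c) b
    simp only [map_add, LinearMap.add_apply] at h
    exact csub3 h (hflex a b).symm (hflex c b).symm (by abel)
  have main : ∀ x y : V,
      (mul (mul (mul x x) y) x = mul (mul x x) (mul y x)) ↔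
      (sym mul (sym mul (sym mul x x) y) x = sym mul (sym mul x x) (sym mul y x)) := by
    intro x y
    have hxx : sym mul x x = mul x x := by
      show (2:k)⁻¹ • (mul x x + mul x x) = mul x x
      rw [← two_smul k, smul_smul, inv_mul_cancel₀ h2, one_smul]
    have e1 : mul (mul x (mul x y)) x = mul x (mul x (mul y x)) := by
      have h := hflex x (mul x y)
      rwa [hflex x y] at h
    have a4' : mul (mul (mul y x) x) x + mul (mul (mul x x) y) x
        = mul (mul y (mul x x)) x + mul (mul x (mul x y)) x := by
      have h := congrArg (fun z => mul z x) (anti y x x)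
      simpa only [map_add, LinearMap.add_apply] using h
    have dA : mul (mul (mul x x) y) x + mul (mul y x) (mul x x)
        = mul (mul y (mul x x)) x + mul (mul x x) (mul y x) :=
      csub3 a4' (anti (mul y x) x x).symm e1 (by abel)
    have p12 : mul (mul x (mul x x)) y = mul (mul (mul x x) x) y :=
      (congrArg (fun z => mul z y) (hflex x x)).symm
    have q12 : mul y (mul (mul x x) x) = mul y (mul x (mul x x)) :=
      congrArg (fun z => mul y z) (hflex x x)
    have dB : mul (mul y (mul x x)) x + mul (mul x x) (mul x y)
        = mul x (mul (mul x x) y) + mul (mul y x) (mul x x) :=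
      csub4 (anti y (mul x x) x) (anti y x (mul x x)).symm p12.symm q12 (by abel)
    have d4 : mul (mul (mul x x) y) x + mul (mul x y) (mul x x)
        = mul (mul x x) (mul y x) + mul x (mul y (mul x x)) :=
      anti (mul x x) y x
    have EL : sym mul (sym mul (sym mul x x) y) x
        = ((2:k)⁻¹ * (2:k)⁻¹) • (mul (mul (mul x x) y) x + mul (mul y (mul x x)) x
            + (mul x (mul (mul x x) y) + mul x (mul y (mul x x)))) := by
      rw [hxx]
      simp only [sym, map_add, map_smul, LinearMap.add_apply, LinearMap.smul_apply,
        smul_add, smul_smul]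
    have ER : sym mul (sym mul x x) (sym mul y x)
        = ((2:k)⁻¹ * (2:k)⁻¹) • (mul (mul x x) (mul y x) + mul (mul x x) (mul x y)
            + (mul (mul y x) (mul x x) + mul (mul x y) (mul x x))) := by
      rw [hxx]
      simp only [sym, map_add, map_smul, LinearMap.add_apply, LinearMap.smul_apply,
        smul_add, smul_smul]
    constructor
    · intro hJ
      have hA : mul (mul y (mul x x)) x = mul (mul y x) (mul x x) :=
        csub2 dA.symm hJ (by abel)
      have hB : mul x (mul (mul x x) y) = mul (mul x x) (mul x y) :=
        csub2 dB.symm hA (by abel)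
      have hC : mul x (mul y (mul x x)) = mul (mul x y) (mul x x) :=
        csub2 d4.symm hJ (by abel)
      have hsum : mul (mul (mul x x) y) x + mul (mul y (mul x x)) x
            + (mul x (mul (mul x x) y) + mul x (mul y (mul x x)))
          = mul (mul x x) (mul y x) + mul (mul x x) (mul x y)
            + (mul (mul y x) (mul x x) + mul (mul x y) (mul x x)) := by
        rw [hJ, hA, hB, hC]; abel
      rw [EL, ER, hsum]
    · intro hS
      rw [EL, ER] at hS
      have hsum := cancel4 _ _ hS
      have h4A : (mul (mul (mul x x) y) x - mul (mul x x) (mul y x))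
            + (mul (mul (mul x x) y) x - mul (mul x x) (mul y x))
            + ((mul (mul (mul x x) y) x - mul (mul x x) (mul y x))
            + (mul (mul (mul x x) y) x - mul (mul x x) (mul y x))) = 0 :=
        csub5 hsum dA dA dB d4 (by abel)
      have e2 : (2:k) • ((2:k) • (mul (mul (mul x x) y) x - mul (mul x x) (mul y x)))
          = (mul (mul (mul x x) y) x - mul (mul x x) (mul y x))
            + (mul (mul (mul x x) y) x - mul (mul x x) (mul y x))
            + ((mul (mul (mul x x) y) x - mul (mul x x) (mul y x))
            + (mul (mul (mul x x) y) x - mul (mul x x) (mul y x))) := by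
        rw [two_smul k (mul (mul (mul x x) y) x - mul (mul x x) (mul y x)), smul_add,
          two_smul]
      exact sub_eq_zero.mp (cancel2 _ (cancel2 _ (e2.trans h4A)))
  exact ⟨fun h x y => (main x y).mp (h x y), fun h x y => (main x y).mpr (h x y)⟩
end

section
/- Let (A, ∘) be a commutative Jordan algebra over a field of characteristic ≠ 2, and let θ: A × A → A be a skew-symmetric bilinear map satisfying θ(x∘y, z) = θ(x,z)∘y + x∘θ(y,z) for all x, y, z. Define a new product x·y := x∘y + θ(x,y). Then (A, ·) is a noncommutative Jordan algebra (it is flexible and satisfies the Jordan identity), and moreover the symmetrization of · equals ∘ and the commutator of · equals θ. -/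
theorem stmt_4 {k V : Type*} [Field k] [AddCommGroup V] [Module k V]
    (h2 : (2 : k) ≠ 0) (circ θ : V →ₗ[k] V →ₗ[k] V)
    (hcomm : ∀ x y : V, circ x y = circ y x)
    (hjordan : ∀ x y : V, circ (circ (circ x x) y) x = circ (circ x x) (circ y x))
    (hskew : ∀ x y : V, θ x y = - θ y x)
    (hder : ∀ x y z : V, θ (circ x y) z = circ (θ x z) y + circ x (θ y z))
    (m : V → V → V) (hm : ∀ x y : V, m x y = circ x y + θ x y) :
    (∀ x y : V, m (m x y) x = m x (m y x)) ∧
    (∀ x y : V, m (m (m x x) y) x = m (m x x) (m y x)) ∧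
    (∀ x y : V, (2 : k)⁻¹ • (m x y + m y x) = circ x y) ∧
    (∀ x y : V, (2 : k)⁻¹ • (m x y - m y x) = θ x y) := by
  have hxx : ∀ x : V, θ x x = 0 := by
    intro x
    have h := hskew x x
    have h' : (2:k) • θ x x = 0 := by
      rw [two_smul]; nth_rewrite 1 [h]; exact neg_add_cancel _
    rcases smul_eq_zero.mp h' with h'' | h''
    · exact absurd h'' h2
    · exact h''
  have key : ∀ x y : V, θ (circ x y) x = - circ (θ x y) x := by
    intro x y
    rw [hder x y x, hxx x, hskew y x]
    simp [hcomm x (θ x y)]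
  have hTsx : ∀ x : V, θ (circ x x) x = 0 := by
    intro x; rw [key x x, hxx]; simp
  have hTs : ∀ x z : V, θ (circ x x) z = circ x (θ x z) + circ x (θ x z) := by
    intro x z; rw [hder x x z, hcomm (θ x z) x]
  refine ⟨?_, ?_, ?_, ?_⟩
  · intro x y
    simp only [hm, map_add, LinearMap.add_apply]
    simp only [hcomm y x, hskew y x, map_neg, LinearMap.neg_apply,
      hskew x (circ x y), hskew x (θ x y), hcomm x (circ x y), hcomm x (θ x y), key x y]
    abel
  · intro x y
    have e7 : θ x (circ y x) = circ (θ x y) x := by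
      rw [hskew x (circ y x), hcomm y x, key x y, neg_neg]
    have e8 : θ x (θ y x) = θ (θ x y) x := by
      rw [hskew y x, map_neg, hskew x (θ x y), neg_neg]
    simp only [hm, hxx, add_zero, map_add, LinearMap.add_apply]
    rw [hjordan x y, hder (circ x x) y x, hTsx x]
    simp only [hTs x y, hTs x (circ y x), hTs x (θ y x), e7, e8,
      map_add, LinearMap.add_apply, map_zero, LinearMap.zero_apply, zero_add,
      key x (θ x y), hskew x (θ x y), map_neg, LinearMap.neg_apply, neg_neg,
      hcomm (θ x y) x, hcomm x (circ x (θ x y)), hcomm x (θ (θ x y) x)]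
    abel
  · intro x y
    rw [hm, hm, hskew y x, hcomm y x]
    have h3 : circ x y + θ x y + (circ x y + -θ x y) = (2:k) • circ x y := by
      rw [two_smul]; abel
    rw [h3, inv_smul_smul₀ h2]
  · intro x y
    rw [hm, hm, hskew y x, hcomm y x]
    have h3 : circ x y + θ x y - (circ x y + -θ x y) = (2:k) • θ x y := by
      rw [two_smul]; abel
    rw [h3, inv_smul_smul₀ h2]
end

section
/- The complex 3-dimensional algebra A₃₀ with basis e₁, e₂, e₃ and nonzero products e₁·e₁ = e₁, e₂·e₃ = e₃, e₃·e₂ = −e₃ (all other basis products zero) is a noncommutative Jordan algebra: it satisfies the flexible identity (xy)x = x(yx) and the Jordan identity ((xx)y)x = (xx)(yx) for all x, y, and it is neither commutative nor anticommutative. -/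
/-- The algebra A₃₀ : e₁e₁ = e₁, e₂e₃ = e₃, e₃e₂ = −e₃. -/
def mulA30 (x y : Fin 3 → ℂ) : Fin 3 → ℂ :=
  ![x 0 * y 0, 0, x 1 * y 2 - x 2 * y 1]

/-!
`A₃₀` is the direct sum of the ideal `ℂ e₁`, a commutative associative algebra, and the ideal
spanned by `e₂, e₃`, the two-dimensional non-abelian Lie algebra. Both kinds of algebra are
flexible and satisfy the Jordan identity (in the anticommutative summand `x x = 0`), and both
identities are inherited by direct sums. The products `e₂ e₃ = e₃ ≠ e₃ e₂` and
`e₁ e₁ = e₁ ≠ -e₁` rule out commutativity and anticommutativity.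
-/

namespace mulA30

@[simp] lemma apply_zero (x y : Fin 3 → ℂ) : mulA30 x y 0 = x 0 * y 0 := rfl

@[simp] lemma apply_one (x y : Fin 3 → ℂ) : mulA30 x y 1 = 0 := rfl

@[simp] lemma apply_two (x y : Fin 3 → ℂ) : mulA30 x y 2 = x 1 * y 2 - x 2 * y 1 := rfl

lemma flexible (x y : Fin 3 → ℂ) : mulA30 (mulA30 x y) x = mulA30 x (mulA30 y x) := by
  ext i
  fin_cases i <;> simp only [Fin.zero_eta, Fin.mk_one, Fin.reduceFinMk, apply_zero, apply_one,
    apply_two] <;> ring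

lemma jordan (x y : Fin 3 → ℂ) :
    mulA30 (mulA30 (mulA30 x x) y) x = mulA30 (mulA30 x x) (mulA30 y x) := by
  ext i
  fin_cases i <;> simp only [Fin.zero_eta, Fin.mk_one, Fin.reduceFinMk, apply_zero, apply_one,
    apply_two] <;> ring

lemma not_comm : ¬ ∀ x y : Fin 3 → ℂ, mulA30 x y = mulA30 y x := fun h => by
  have h₂ := congrFun (h ![0, 1, 0] ![0, 0, 1]) 2
  norm_num [Matrix.cons_val_two] at h₂

lemma not_anticomm : ¬ ∀ x y : Fin 3 → ℂ, mulA30 x y = - mulA30 y x := fun h => by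
  have h₀ := congrFun (h ![1, 0, 0] ![1, 0, 0]) 0
  norm_num at h₀

end mulA30

theorem stmt_7 :
    (∀ x y : Fin 3 → ℂ, mulA30 (mulA30 x y) x = mulA30 x (mulA30 y x)) ∧
    (∀ x y : Fin 3 → ℂ,
      mulA30 (mulA30 (mulA30 x x) y) x = mulA30 (mulA30 x x) (mulA30 y x)) ∧
    ¬ (∀ x y : Fin 3 → ℂ, mulA30 x y = mulA30 y x) ∧
    ¬ (∀ x y : Fin 3 → ℂ, mulA30 x y = - mulA30 y x) :=
  ⟨mulA30.flexible, mulA30.jordan, mulA30.not_comm, mulA30.not_anticomm⟩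
end

section
/- Every commutative Jordan algebra is a standard algebra: if A is commutative and satisfies ((xx)y)x = (xx)(yx), then A satisfies (x,y,z)+(z,x,y)−(x,z,y) = 0 and (x,y,wz)+(w,y,xz)+(z,y,wx) = 0 for all w,x,y,z, where (x,y,z) = (xy)z − x(yz). -/
theorem key_lin {k V : Type*} [Field k] [AddCommGroup V] [Module k V]
    (h2 : (2 : k) ≠ 0) (mul : V →ₗ[k] V →ₗ[k] V)
    (hcomm : ∀ x y : V, mul x y = mul y x)
    (hjordan : ∀ x y : V, mul (mul (mul x x) y) x = mul (mul x x) (mul y x))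
    (a b c y : V) :
    (mul (mul (mul a b) y) c - mul (mul a b) (mul y c))
      + (mul (mul (mul a c) y) b - mul (mul a c) (mul y b))
      + (mul (mul (mul b c) y) a - mul (mul b c) (mul y a)) = 0 := by
  have e : (mul (mul (mul (a+b+c) (a+b+c)) y) (a+b+c) - mul (mul (a+b+c) (a+b+c)) (mul y (a+b+c)))
      - (mul (mul (mul (a+b) (a+b)) y) (a+b) - mul (mul (a+b) (a+b)) (mul y (a+b)))
      - (mul (mul (mul (a+c) (a+c)) y) (a+c) - mul (mul (a+c) (a+c)) (mul y (a+c)))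
      - (mul (mul (mul (b+c) (b+c)) y) (b+c) - mul (mul (b+c) (b+c)) (mul y (b+c)))
      + (mul (mul (mul a a) y) a - mul (mul a a) (mul y a))
      + (mul (mul (mul b b) y) b - mul (mul b b) (mul y b))
      + (mul (mul (mul c c) y) c - mul (mul c c) (mul y c)) = 0 := by
    simp only [hjordan]; abel
  have e2 : (2 : k) • ((mul (mul (mul a b) y) c - mul (mul a b) (mul y c))
      + (mul (mul (mul a c) y) b - mul (mul a c) (mul y b))
      + (mul (mul (mul b c) y) a - mul (mul b c) (mul y a))) = 0 := by
    rw [two_smul, ← e]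
    simp only [map_add, LinearMap.add_apply, hcomm]
    abel
  rcases smul_eq_zero.mp e2 with h | h
  · exact absurd h h2
  · exact h

theorem stmt_12 {k V : Type*} [Field k] [AddCommGroup V] [Module k V]
    (h2 : (2 : k) ≠ 0) (mul : V →ₗ[k] V →ₗ[k] V)
    (hcomm : ∀ x y : V, mul x y = mul y x)
    (hjordan : ∀ x y : V, mul (mul (mul x x) y) x = mul (mul x x) (mul y x)) :
    (∀ x y z : V,
      (mul (mul x y) z - mul x (mul y z)) + (mul (mul z x) y - mul z (mul x y))
        - (mul (mul x z) y - mul x (mul z y)) = 0) ∧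
    (∀ w x y z : V,
      (mul (mul x y) (mul w z) - mul x (mul y (mul w z)))
        + (mul (mul w y) (mul x z) - mul w (mul y (mul x z)))
        + (mul (mul z y) (mul w x) - mul z (mul y (mul w x))) = 0) := by
  constructor
  · intro x y z
    simp only [hcomm]
    abel
  · intro w x y z
    have hS := key_lin h2 mul hcomm hjordan w z x y
    rw [← neg_eq_zero, ← hS]
    simp only [hcomm]
    abel
end

section
/- The complex 4-dimensional algebra J₁₃ with basis e₁,…,e₄ and nonzero products e₁e₂ = e₃, e₁e₃ = e₄, e₂e₁ = −e₃, e₃e₁ = −e₄ is a nilpotent noncommutative Jordan algebra: it satisfies the flexible identity (xy)x = x(yx), the Jordan identity ((xx)y)x = (xx)(yx), and the product of any four elements (in any association) is zero. -/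
/-- The algebra J₁₃ : e₁e₂ = e₃, e₁e₃ = e₄, e₂e₁ = −e₃, e₃e₁ = −e₄. -/
def mulJ13 (x y : Fin 4 → ℂ) : Fin 4 → ℂ :=
  ![0, 0, x 0 * y 1 - x 1 * y 0, x 0 * y 2 - x 2 * y 0]

theorem stmt_17 :
    (∀ x y : Fin 4 → ℂ, mulJ13 (mulJ13 x y) x = mulJ13 x (mulJ13 y x)) ∧
    (∀ x y : Fin 4 → ℂ,
      mulJ13 (mulJ13 (mulJ13 x x) y) x = mulJ13 (mulJ13 x x) (mulJ13 y x)) ∧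
    (∀ a b c d : Fin 4 → ℂ,
      mulJ13 (mulJ13 (mulJ13 a b) c) d = 0 ∧
      mulJ13 (mulJ13 a (mulJ13 b c)) d = 0 ∧
      mulJ13 (mulJ13 a b) (mulJ13 c d) = 0 ∧
      mulJ13 a (mulJ13 (mulJ13 b c) d) = 0 ∧
      mulJ13 a (mulJ13 b (mulJ13 c d)) = 0) := by
  refine ⟨fun x y => ?_, fun x y => ?_, fun a b c d => ⟨?_, ?_, ?_, ?_, ?_⟩⟩ <;>
    · simp only [mulJ13]
      funext i
      fin_cases i <;> simp <;> ring
end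

section
/- The complex 3-dimensional algebra A₃₀ (e₁e₁ = e₁, e₂e₃ = e₃, e₃e₂ = −e₃) degenerates to A₂₇ (e₁e₁ = e₂, e₁e₃ = e₃, e₃e₁ = −e₃): for each t ≠ 0, the basis E₁ᵗ = te₁+e₂−e₃, E₂ᵗ = −te₂+te₃, E₃ᵗ = t²e₃ of A₃₀ has structure constants that are polynomial in t and converge, as t → 0, to the structure constants of A₂₇; concretely E₁ᵗ·E₁ᵗ = E₂ᵗ + t·(linear combination expressible in the Eᵢᵗ with polynomial coefficients), E₁ᵗ·E₃ᵗ = E₃ᵗ, E₃ᵗ·E₁ᵗ = −E₃ᵗ, and all other products of the Eᵢᵗ are O(t) in the Eᵢᵗ-coordinates. -/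
theorem linearIndependent_upperTriangular_fin_three {R : Type*} [CommRing R] [IsDomain R]
    {a b c d e f : R} (ha : a ≠ 0) (hd : d ≠ 0) (hf : f ≠ 0) :
    LinearIndependent R ![![a, b, c], ![0, d, e], ![0, 0, f]] := by
  have hdet : (Matrix.of ![![a, b, c], ![0, d, e], ![0, 0, f]]).det = a * d * f := by
    simp [Matrix.det_fin_three]
  exact Matrix.linearIndependent_rows_of_det_ne_zero (hdet ▸ mul_ne_zero (mul_ne_zero ha hd) hf)

theorem mulA30_vecCons (a b c a' b' c' : ℂ) :
    mulA30 ![a, b, c] ![a', b', c'] = ![a * a', 0, b * c' - c * b'] :=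
  rfl

/-- Parametrized basis for the degeneration A₃₀ → A₂₇:
E₁ᵗ = te₁+e₂−e₃, E₂ᵗ = −te₂+te₃, E₃ᵗ = t²e₃. -/
theorem stmt_18 (t : ℂ) (ht : t ≠ 0) :
    ∀ E₁ E₂ E₃ : Fin 3 → ℂ,
      E₁ = ![t, 1, -1] → E₂ = ![0, -t, t] → E₃ = ![0, 0, t ^ 2] →
      LinearIndependent ℂ ![E₁, E₂, E₃] ∧
      mulA30 E₁ E₁ = E₂ + t • E₁ ∧
      mulA30 E₁ E₂ = 0 ∧
      mulA30 E₁ E₃ = E₃ ∧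
      mulA30 E₂ E₁ = 0 ∧
      mulA30 E₂ E₂ = 0 ∧
      mulA30 E₂ E₃ = -t • E₃ ∧
      mulA30 E₃ E₁ = -E₃ ∧
      mulA30 E₃ E₂ = t • E₃ ∧
      mulA30 E₃ E₃ = 0 := by
  rintro E₁ E₂ E₃ rfl rfl rfl
  refine ⟨linearIndependent_upperTriangular_fin_three ht (neg_ne_zero.mpr ht) (pow_ne_zero 2 ht),
    ?_, ?_, ?_, ?_, ?_, ?_, ?_, ?_, ?_⟩
  all_goals
    rw [mulA30_vecCons]
    ext i
    fin_cases i <;> simp <;> ring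
end
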